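/- A congruence R on G(E) is a non-Rees congruence if and only if there exists a vertex v ∈ E⁰ with (v, μ) ∈ R for some μ ∈ G(E) \ {v} but (v, 0) ∉ R. -/

import Mathlib

universe u

/-- A directed graph: vertices, edges, source and range maps. -/
structure DGraph : Type (u + 1) where
  V : Type u
  Ed : Type u
  src : Ed → V
  rng : Ed → V

/-- The end vertex of a list of edges started at `v` (ignoring composability). -/
def DGraph.ranAux (G : DGraph) : G.V → List G.Ed → G.V
  | v, [] => v
  | _, e :: es => DGraph.ranAux G (G.rng e) es

/-- The edges `l` form a composable path starting at `v`. -/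
def DGraph.Chain (G : DGraph) : G.V → List G.Ed → Prop
  | _, [] => True
  | v, e :: es => G.src e = v ∧ DGraph.Chain G (G.rng e) es

theorem DGraph.ranAux_append (G : DGraph) (v : G.V) (l1 l2 : List G.Ed) :
    G.ranAux v (l1 ++ l2) = G.ranAux (G.ranAux v l1) l2 := by
  induction l1 generalizing v with
  | nil => rfl
  | cons e es ih => exact ih (G.rng e)

theorem DGraph.chain_append (G : DGraph) {v : G.V} {l1 l2 : List G.Ed}
    (h1 : G.Chain v l1) (h2 : G.Chain (G.ranAux v l1) l2) : G.Chain v (l1 ++ l2) := by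
  induction l1 generalizing v with
  | nil => exact h2
  | cons e es ih => exact ⟨h1.1, ih h1.2 h2⟩

theorem DGraph.chain_append_right (G : DGraph) {v : G.V} {l1 l2 : List G.Ed}
    (h : G.Chain v (l1 ++ l2)) : G.Chain (G.ranAux v l1) l2 := by
  induction l1 generalizing v with
  | nil => exact h
  | cons e es ih => exact ih h.2

/-- A (finite, directed) path in the graph `G`: a start vertex together
with a composable list of edges. Vertices are the paths of length `0`. -/
structure GPath (G : DGraph.{u}) : Type u where
  start : G.V
  edges : List G.Ed
  chain : G.Chain start edges

namespace GPath

variable {G : DGraph}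

/-- The range (end vertex) of a path. -/
def ran (p : GPath G) : G.V := G.ranAux p.start p.edges

/-- The path of length zero at a vertex. -/
def ofVertex (G : DGraph) (v : G.V) : GPath G := ⟨v, [], trivial⟩

/-- The path of length one given by an edge. -/
def ofEdge (G : DGraph) (e : G.Ed) : GPath G := ⟨G.src e, [e], ⟨rfl, trivial⟩⟩

@[simp] theorem ofVertex_ran (G : DGraph) (v : G.V) : (ofVertex G v).ran = v := rfl

@[simp] theorem ofEdge_ran (G : DGraph) (e : G.Ed) : (ofEdge G e).ran = G.rng e := rfl

/-- Concatenation of composable paths. -/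
def append (p q : GPath G) (h : p.ran = q.start) : GPath G :=
  ⟨p.start, p.edges ++ q.edges,
    G.chain_append p.chain (by
      show G.Chain (G.ranAux p.start p.edges) q.edges
      have : G.ranAux p.start p.edges = q.start := h
      rw [this]; exact q.chain)⟩

@[simp] theorem append_ran (p q : GPath G) (h : p.ran = q.start) :
    (p.append q h).ran = q.ran := by
  show G.ranAux p.start (p.edges ++ q.edges) = q.ran
  rw [G.ranAux_append]
  have : G.ranAux p.start p.edges = q.start := h
  rw [this]; rfl

/-- `y` is an initial segment of the path `p`. -/
def IsPrefixOf (y p : GPath G) : Prop := y.start = p.start ∧ y.edges <+: p.edges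

/-- The remainder `t` of `p` after its initial segment `y`, so that `p = y ++ t`. -/
def remainder (y p : GPath G) (h : y.IsPrefixOf p) : GPath G :=
  ⟨y.ran, p.edges.drop y.edges.length, by
    obtain ⟨l2, hl⟩ := h.2
    rw [← hl, List.drop_left]
    show G.Chain (G.ranAux y.start y.edges) l2
    rw [h.1]
    exact G.chain_append_right (v := p.start) (l1 := y.edges) (l2 := l2)
      (by rw [hl]; exact p.chain)⟩

@[simp] theorem remainder_ran (y p : GPath G) (h : y.IsPrefixOf p) :
    (y.remainder p h).ran = p.ran := by
  obtain ⟨l2, hl⟩ := h.2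
  show G.ranAux y.ran (p.edges.drop y.edges.length) = p.ran
  rw [← hl, List.drop_left]
  show G.ranAux (G.ranAux y.start y.edges) l2 = p.ran
  rw [h.1, ← G.ranAux_append, hl]
  rfl

end GPath

/-- The graph inverse semigroup of `G` (in normal form): its elements are zero together
with the elements `x * y⁻¹` for paths `x`, `y` with the same range. -/
inductive GIS (G : DGraph.{u}) : Type u where
  | zero : GIS G
  | mk (x y : GPath G) (h : x.ran = y.ran) : GIS G

instance (G : DGraph) : Zero (GIS G) := ⟨GIS.zero⟩

open scoped Classical in
/-- Multiplication in the graph inverse semigroup. -/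
noncomputable def GIS.gmul {G : DGraph} : GIS G → GIS G → GIS G
  | GIS.zero, _ => GIS.zero
  | GIS.mk _ _ _, GIS.zero => GIS.zero
  | GIS.mk x y hxy, GIS.mk p q hpq =>
    if h1 : y.IsPrefixOf p then
      GIS.mk (x.append (y.remainder p h1) hxy) q
        (by exact (GPath.append_ran _ _ _).trans ((GPath.remainder_ran _ _ _).trans hpq))
    else if h2 : p.IsPrefixOf y then
      GIS.mk x (q.append (p.remainder y h2) hpq.symm)
        (by exact hxy.trans ((GPath.append_ran _ _ _).trans (GPath.remainder_ran _ _ _)).symm)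
    else GIS.zero

noncomputable instance (G : DGraph) : Mul (GIS G) := ⟨GIS.gmul⟩

/-- The element of `GIS G` corresponding to a vertex `v` (i.e. `v = v * v⁻¹`). -/
def vertexEl (G : DGraph) (v : G.V) : GIS G :=
  GIS.mk (GPath.ofVertex G v) (GPath.ofVertex G v) rfl

/-- The element of `GIS G` corresponding to an edge `e` (i.e. `e = e * r(e)⁻¹`). -/
def edgeEl (G : DGraph) (e : G.Ed) : GIS G :=
  GIS.mk (GPath.ofEdge G e) (GPath.ofVertex G (G.rng e)) rfl

/-- The inverse operation on `GIS G`: `(x y⁻¹)⁻¹ = y x⁻¹`. -/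
def GIS.inv {G : DGraph} : GIS G → GIS G
  | GIS.zero => GIS.zero
  | GIS.mk x y h => GIS.mk y x h.symm

/-- `a` lies in the principal left ideal generated by `b` (`S¹a ⊆ S¹b`). -/
def GreenLeL {G : DGraph} (a b : GIS G) : Prop := a = b ∨ ∃ c, a = c * b

/-- `a` lies in the principal right ideal generated by `b` (`aS¹ ⊆ bS¹`). -/
def GreenLeR {G : DGraph} (a b : GIS G) : Prop := a = b ∨ ∃ c, a = b * c

/-- `a` lies in the principal two-sided ideal generated by `b` (`S¹aS¹ ⊆ S¹bS¹`). -/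
def GreenLeJ {G : DGraph} (a b : GIS G) : Prop :=
  a = b ∨ (∃ c, a = c * b) ∨ (∃ c, a = b * c) ∨ (∃ c d, a = c * b * d)

/-- Green's `L`-relation. -/
def GreenEqL {G : DGraph} (a b : GIS G) : Prop := GreenLeL a b ∧ GreenLeL b a

/-- Green's `R`-relation. -/
def GreenEqR {G : DGraph} (a b : GIS G) : Prop := GreenLeR a b ∧ GreenLeR b a

/-- Green's `J`-relation. -/
def GreenEqJ {G : DGraph} (a b : GIS G) : Prop := GreenLeJ a b ∧ GreenLeJ b a

/-- There is a (possibly trivial) directed path from `v` to `w` in `G`. -/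
def GConnected (G : DGraph) (v w : G.V) : Prop := ∃ t : GPath G, t.start = v ∧ t.ran = w

/-- `I` is a (two-sided) ideal of `GIS G`. -/
def GISIdeal {G : DGraph} (I : Set (GIS G)) : Prop :=
  ∀ a ∈ I, ∀ c : GIS G, a * c ∈ I ∧ c * a ∈ I

/-- `R` is the Rees congruence of some ideal `I`, i.e. `R = (I × I) ∪ Δ`. -/
def IsReesCon {G : DGraph} (R : Con (GIS G)) : Prop :=
  ∃ I : Set (GIS G), GISIdeal I ∧ ∀ a b : GIS G, R a b ↔ (a ∈ I ∧ b ∈ I) ∨ a = b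

/-- The only congruences on `GIS G` are the universal one and the diagonal. -/
def CongFree (G : DGraph) : Prop :=
  ∀ R : Con (GIS G), (∀ a b : GIS G, R a b) ∨ (∀ a b : GIS G, R a b ↔ a = b)

/-- The natural partial order on the inverse semigroup `GIS G`:
`a ≤ b` iff `a = ε * b` for some idempotent `ε`. -/
def natLe {G : DGraph} (a b : GIS G) : Prop := ∃ ε : GIS G, ε * ε = ε ∧ a = ε * b

/-- The graph obtained from `G` by deleting the vertices in `S` and all
edges incident to them. -/
def DGraph.delete (G : DGraph) (S : Set G.V) : DGraph where
  V := {v : G.V // v ∉ S}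
  Ed := {e : G.Ed // G.src e ∉ S ∧ G.rng e ∉ S}
  src e := ⟨G.src e.1, e.2.1⟩
  rng e := ⟨G.rng e.1, e.2.2⟩

/-- The graph with a single vertex and `n` loops; its graph inverse semigroup
is the polycyclic monoid `Pₙ`. -/
def polyGraph (n : ℕ) : DGraph :=
  ⟨PUnit, Fin n, fun _ => PUnit.unit, fun _ => PUnit.unit⟩

/-!
A Rees congruence is determined by the class of `0`, so `R` is Rees iff every element related
to a different one is related to `0`. For `a = x y⁻¹` we have `x⁻¹ a y = r(y)` and
`a = x r(y) y⁻¹`, so if `a R b` and `x⁻¹ b y ≠ r(y)`, the hypothesis at the vertex `r(y)` gives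
`r(y) R 0` and hence `a R 0`. If instead both `x⁻¹ b y = r(y)` and, for `b = p q⁻¹`,
`p⁻¹ a q = r(q)`, a computation in normal form shows that `x` and `p` are prefixes of each other,
as are `y` and `q`, so `a = b`.
-/

namespace GPath

variable {G : DGraph}

theorem ext {p q : GPath G} (hs : p.start = q.start) (he : p.edges = q.edges) : p = q := by
  cases p; cases q
  cases hs; cases he
  rfl

@[simp] theorem append_start (p q : GPath G) (h : p.ran = q.start) :
    (p.append q h).start = p.start := rfl

@[simp] theorem append_edges (p q : GPath G) (h : p.ran = q.start) :
    (p.append q h).edges = p.edges ++ q.edges := rfl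

@[simp] theorem remainder_start (y p : GPath G) (h : y.IsPrefixOf p) :
    (y.remainder p h).start = y.ran := rfl

@[simp] theorem remainder_edges (y p : GPath G) (h : y.IsPrefixOf p) :
    (y.remainder p h).edges = p.edges.drop y.edges.length := rfl

@[simp] theorem ofVertex_start (v : G.V) : (ofVertex G v).start = v := rfl

@[simp] theorem ofVertex_edges (v : G.V) : (ofVertex G v).edges = [] := rfl

theorem isPrefixOf_refl (p : GPath G) : p.IsPrefixOf p := ⟨rfl, List.prefix_refl _⟩

theorem eq_of_isPrefixOf_of_drop_eq_nil {p x : GPath G} (hpx : p.IsPrefixOf x)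
    (h : x.edges.drop p.edges.length = []) : p = x :=
  ext hpx.1 (hpx.2.eq_of_length (le_antisymm hpx.2.length_le (List.drop_eq_nil_iff.1 h)))

theorem IsPrefixOf.antisymm {p q : GPath G} (hpq : p.IsPrefixOf q) (hqp : q.IsPrefixOf p) :
    p = q :=
  ext hpq.1 (hpq.2.eq_of_length (le_antisymm hpq.2.length_le hqp.2.length_le))

end GPath

namespace GIS

variable {G : DGraph}

theorem zero_mul (a : GIS G) : 0 * a = 0 := rfl

theorem mul_zero (a : GIS G) : a * 0 = 0 := by
  cases a <;> rfl

theorem mk_mul_mk_of_isPrefixOf {x y p q : GPath G} {hxy : x.ran = y.ran} {hpq : p.ran = q.ran}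
    (h : y.IsPrefixOf p) :
    mk x y hxy * mk p q hpq =
      mk (x.append (y.remainder p h) (hxy.trans (GPath.remainder_start y p h).symm)) q
        ((GPath.append_ran _ _ _).trans ((GPath.remainder_ran _ _ _).trans hpq)) := by
  show gmul _ _ = _
  simp only [gmul, dif_pos h]

theorem mk_mul_mk_of_isPrefixOf' {x y p q : GPath G} {hxy : x.ran = y.ran} {hpq : p.ran = q.ran}
    (h₁ : ¬ y.IsPrefixOf p) (h₂ : p.IsPrefixOf y) :
    mk x y hxy * mk p q hpq =
      mk x (q.append (p.remainder y h₂) (hpq.symm.trans (GPath.remainder_start p y h₂).symm))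
        (hxy.trans ((GPath.append_ran _ _ _).trans (GPath.remainder_ran _ _ _)).symm) := by
  show gmul _ _ = _
  simp only [gmul, dif_neg h₁, dif_pos h₂]

theorem mk_mul_mk_eq_zero {x y p q : GPath G} {hxy : x.ran = y.ran} {hpq : p.ran = q.ran}
    (h₁ : ¬ y.IsPrefixOf p) (h₂ : ¬ p.IsPrefixOf y) :
    mk x y hxy * mk p q hpq = 0 := by
  show gmul _ _ = _
  simp only [gmul, dif_neg h₁, dif_neg h₂]
  rfl

end GIS

section PathElements

variable {G : DGraph}

def pathEl (x : GPath G) : GIS G :=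
  GIS.mk x (GPath.ofVertex G x.ran) (GPath.ofVertex_ran G x.ran).symm

def pathInvEl (x : GPath G) : GIS G :=
  GIS.mk (GPath.ofVertex G x.ran) x (GPath.ofVertex_ran G x.ran)

open GIS GPath

theorem pathEl_mul_vertexEl_mul_pathInvEl {x y : GPath G} (hxy : x.ran = y.ran) :
    pathEl x * vertexEl G y.ran * pathInvEl y = mk x y hxy := by
  have hv : (ofVertex G x.ran).IsPrefixOf (ofVertex G y.ran) := ⟨hxy, List.prefix_refl _⟩
  rw [pathEl, vertexEl, mk_mul_mk_of_isPrefixOf hv, pathInvEl,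
    mk_mul_mk_of_isPrefixOf (isPrefixOf_refl _), GIS.mk.injEq]
  exact ⟨ext rfl (by simp), rfl⟩

theorem pathInvEl_mul_mk_mul_pathEl {x y : GPath G} (hxy : x.ran = y.ran) :
    pathInvEl x * mk x y hxy * pathEl y = vertexEl G y.ran := by
  rw [pathInvEl, mk_mul_mk_of_isPrefixOf (isPrefixOf_refl _), pathEl,
    mk_mul_mk_of_isPrefixOf (isPrefixOf_refl _), vertexEl, GIS.mk.injEq]
  exact ⟨ext hxy (by simp), rfl⟩

theorem eq_pathInvEl_of_mul_pathEl_eq_vertexEl {c : GIS G} {y : GPath G}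
    (h : c * pathEl y = vertexEl G y.ran) : c = pathInvEl y := by
  obtain _ | ⟨u, s, hus⟩ := c
  · cases h
  rw [pathEl] at h
  rw [pathInvEl, GIS.mk.injEq]
  by_cases hsy : s.IsPrefixOf y
  · rw [mk_mul_mk_of_isPrefixOf hsy, vertexEl, GIS.mk.injEq] at h
    have hs := congrArg GPath.start h.1
    have he := congrArg GPath.edges h.1
    simp only [append_start, append_edges, remainder_edges, ofVertex_start, ofVertex_edges,
      List.append_eq_nil_iff] at hs he
    exact ⟨ext hs he.1, eq_of_isPrefixOf_of_drop_eq_nil hsy he.2⟩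
  by_cases hys : y.IsPrefixOf s
  · rw [mk_mul_mk_of_isPrefixOf' hsy hys, vertexEl, GIS.mk.injEq] at h
    have he := congrArg GPath.edges h.2
    simp only [append_edges, remainder_edges, ofVertex_edges, List.nil_append] at he
    exact ⟨h.1, (eq_of_isPrefixOf_of_drop_eq_nil hys he).symm⟩
  · rw [mk_mul_mk_eq_zero hsy hys] at h
    cases h

theorem isPrefixOf_of_pathInvEl_mul_mk_eq_pathInvEl {x y p q : GPath G} {hpq : p.ran = q.ran}
    (h : pathInvEl x * mk p q hpq = pathInvEl y) : p.IsPrefixOf x ∧ q.IsPrefixOf y := by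
  rw [pathInvEl] at h
  by_cases hxp : x.IsPrefixOf p
  · rw [mk_mul_mk_of_isPrefixOf hxp, pathInvEl, GIS.mk.injEq] at h
    have he := congrArg GPath.edges h.1
    simp only [append_edges, remainder_edges, ofVertex_edges, List.nil_append] at he
    obtain rfl := eq_of_isPrefixOf_of_drop_eq_nil hxp he
    exact ⟨isPrefixOf_refl _, h.2 ▸ isPrefixOf_refl _⟩
  by_cases hpx : p.IsPrefixOf x
  · rw [mk_mul_mk_of_isPrefixOf' hxp hpx, pathInvEl, GIS.mk.injEq] at h
    exact ⟨hpx, h.2 ▸ ⟨rfl, List.prefix_append _ _⟩⟩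
  · rw [mk_mul_mk_eq_zero hxp hpx] at h
    cases h

theorem mk_eq_mk_of_sandwiches_eq_vertexEl {x y p q : GPath G} {hxy : x.ran = y.ran}
    {hpq : p.ran = q.ran}
    (h₁ : pathInvEl x * mk p q hpq * pathEl y = vertexEl G y.ran)
    (h₂ : pathInvEl p * mk x y hxy * pathEl q = vertexEl G q.ran) :
    mk x y hxy = mk p q hpq := by
  obtain ⟨hpx, hqy⟩ :=
    isPrefixOf_of_pathInvEl_mul_mk_eq_pathInvEl (eq_pathInvEl_of_mul_pathEl_eq_vertexEl h₁)
  obtain ⟨hxp, hyq⟩ :=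
    isPrefixOf_of_pathInvEl_mul_mk_eq_pathInvEl (eq_pathInvEl_of_mul_pathEl_eq_vertexEl h₂)
  rw [GIS.mk.injEq]
  exact ⟨hxp.antisymm hpx, hyq.antisymm hqy⟩

end PathElements

section Congruence

variable {G : DGraph} (R : Con (GIS G))

open GIS

theorem rel_mk_zero_of_rel_vertexEl_zero {x y : GPath G} (hxy : x.ran = y.ran)
    (h : R (vertexEl G y.ran) 0) : R (mk x y hxy) 0 := by
  have := R.mul (R.mul (R.refl (pathEl x)) h) (R.refl (pathInvEl y))
  rwa [pathEl_mul_vertexEl_mul_pathInvEl hxy, GIS.mul_zero, GIS.zero_mul] at this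

variable {R}

theorem rel_mk_zero_of_sandwich_ne
    (H : ∀ v mu, mu ≠ vertexEl G v → R (vertexEl G v) mu → R (vertexEl G v) 0)
    {x y : GPath G} {hxy : x.ran = y.ran} {b : GIS G} (hab : R (mk x y hxy) b)
    (hne : pathInvEl x * b * pathEl y ≠ vertexEl G y.ran) : R (mk x y hxy) 0 := by
  have hv := R.mul (R.mul (R.refl (pathInvEl x)) hab) (R.refl (pathEl y))
  rw [pathInvEl_mul_mk_mul_pathEl hxy] at hv
  exact rel_mk_zero_of_rel_vertexEl_zero R hxy (H _ _ hne hv)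

theorem rel_zero_of_rel_of_ne
    (H : ∀ v mu, mu ≠ vertexEl G v → R (vertexEl G v) mu → R (vertexEl G v) 0)
    {a b : GIS G} (hab : R a b) (hne : a ≠ b) : R a 0 := by
  obtain _ | ⟨x, y, hxy⟩ := a
  · exact R.refl 0
  obtain _ | ⟨p, q, hpq⟩ := b
  · exact hab
  by_cases h₁ : pathInvEl x * mk p q hpq * pathEl y = vertexEl G y.ran
  · by_cases h₂ : pathInvEl p * mk x y hxy * pathEl q = vertexEl G q.ran
    · exact absurd (mk_eq_mk_of_sandwiches_eq_vertexEl h₁ h₂) hne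
    · exact R.trans hab (rel_mk_zero_of_sandwich_ne H (R.symm hab) h₂)
  · exact rel_mk_zero_of_sandwich_ne H hab h₁

theorem IsReesCon.rel_zero_of_rel_of_ne (hR : IsReesCon R) {a b : GIS G} (hab : R a b)
    (hne : a ≠ b) : R a 0 := by
  obtain ⟨I, hI, hRI⟩ := hR
  have ha : a ∈ I := (((hRI a b).1 hab).resolve_right hne).1
  have h0 : (0 : GIS G) ∈ I := GIS.mul_zero a ▸ (hI a ha 0).1
  exact (hRI a 0).2 (Or.inl ⟨ha, h0⟩)

theorem isReesCon_of_rel_zero (H : ∀ a b, R a b → a ≠ b → R a 0) : IsReesCon R := by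
  refine ⟨{c | R c 0}, fun a ha c => ⟨?_, ?_⟩, fun a b => ⟨fun hab => ?_, ?_⟩⟩
  · show R (a * c) 0
    simpa only [GIS.zero_mul] using R.mul ha (R.refl c)
  · show R (c * a) 0
    simpa only [GIS.mul_zero] using R.mul (R.refl c) ha
  · by_cases heq : a = b
    · exact Or.inr heq
    · exact Or.inl ⟨H a b hab heq, H b a (R.symm hab) (Ne.symm heq)⟩
  · rintro (⟨ha, hb⟩ | rfl)
    · exact R.trans ha (R.symm hb)
    · exact R.refl a

theorem isReesCon_iff_rel_zero : IsReesCon R ↔ ∀ a b, R a b → a ≠ b → R a 0 :=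
  ⟨fun hR _ _ => hR.rel_zero_of_rel_of_ne, isReesCon_of_rel_zero⟩

theorem isReesCon_iff_rel_vertexEl_zero :
    IsReesCon R ↔ ∀ v mu, mu ≠ vertexEl G v → R (vertexEl G v) mu → R (vertexEl G v) 0 :=
  isReesCon_iff_rel_zero.trans
    ⟨fun h _ _ hne hv => h _ _ hv hne.symm, fun H _ _ => rel_zero_of_rel_of_ne H⟩

end Congruence

/-- A congruence `R` on `G(E)` is a non-Rees congruence iff there is a
vertex `v` with `(v, μ) ∈ R` for some `μ ≠ v` but `(v, 0) ∉ R`. -/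
theorem stmt11 (G : DGraph) (R : Con (GIS G)) :
    ¬ IsReesCon R ↔
      ∃ v : G.V, (∃ mu : GIS G, mu ≠ vertexEl G v ∧ R (vertexEl G v) mu) ∧
        ¬ R (vertexEl G v) 0 := by
  rw [isReesCon_iff_rel_vertexEl_zero]
  push Not
  simp only [← and_assoc, exists_and_right]
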